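/- arXiv:2310.14942 — 2 statements merged into one kernel-verified Lean document; each statement's English description precedes it below -/
import Mathlib

section
/- Let m ≥ 2 be a natural number, let E : Fin m → ℝ be such that for every i, E i = 0 or E i = 1, let V = (1/m) * ∑ i, E i, and let s = Real.sqrt ((1/(m-1)) * ∑ i, (E i - V)^2). Let η, τ, t_α be real numbers. If 0 < V, V < 1, and Real.sqrt (m - 1) * (V - η + τ) - t_α * Real.sqrt (V - V^2) > 0, then Real.sqrt m * (V - η + τ) > t_α * s. -/
/-- Theorem 2 of the paper at the level of the observed data: with binary verification outcomes
`E i ∈ {0,1}`, empirical verification success rate `V` and sample standard deviation `s`,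
the rejection condition `√m (V − η + τ) > t_α · s` holds whenever
`√(m−1)·(V − η + τ) − t_α·√(V − V²) > 0`. -/
theorem verification_rejection (m : ℕ) (hm : 2 ≤ m) (E : Fin m → ℝ)
    (hE : ∀ i, E i = 0 ∨ E i = 1) (V s η τ tα : ℝ)
    (hV : V = (1 / (m : ℝ)) * ∑ i, E i)
    (hs : s = Real.sqrt ((1 / ((m : ℝ) - 1)) * ∑ i, (E i - V) ^ 2))
    (hV0 : 0 < V) (hV1 : V < 1)
    (h : Real.sqrt ((m : ℝ) - 1) * (V - η + τ) - tα * Real.sqrt (V - V ^ 2) > 0) :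
    Real.sqrt m * (V - η + τ) > tα * s := by
  have hm1 : (1 : ℝ) ≤ (m : ℝ) - 1 := by
    have : (2 : ℝ) ≤ (m : ℝ) := by exact_mod_cast hm
    linarith
  have hm0 : (0 : ℝ) < (m : ℝ) := by linarith
  have hm10 : (0 : ℝ) < (m : ℝ) - 1 := by linarith
  -- sum of E equals m * V
  have hsum : ∑ i, E i = (m : ℝ) * V := by
    rw [hV]; field_simp
  have hsq : ∀ i, E i ^ 2 = E i := by
    intro i; rcases hE i with h1 | h1 <;> rw [h1] <;> ring
  have hsum2 : ∑ i, (E i - V) ^ 2 = (m : ℝ) * (V - V ^ 2) := by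
    have : ∑ i, (E i - V) ^ 2 = ∑ i, (E i - 2 * V * E i + V ^ 2) := by
      apply Finset.sum_congr rfl
      intro i _
      have := hsq i
      ring_nf
      nlinarith [hsq i]
    rw [this, Finset.sum_add_distrib, Finset.sum_sub_distrib, ← Finset.mul_sum, hsum,
      Finset.sum_const, Finset.card_univ, Fintype.card_fin, nsmul_eq_mul]
    ring
  -- key identity: √(m−1) * s = √m * √(V − V²)
  have hVV : (0 : ℝ) ≤ V - V ^ 2 := by nlinarith
  have hkey : Real.sqrt ((m : ℝ) - 1) * s = Real.sqrt m * Real.sqrt (V - V ^ 2) := by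
    rw [hs, hsum2, ← Real.sqrt_mul hm10.le, ← Real.sqrt_mul hm0.le]
    congr 1
    field_simp
  have hsm : (0 : ℝ) < Real.sqrt m := Real.sqrt_pos.mpr hm0
  have hsm1 : (0 : ℝ) < Real.sqrt ((m : ℝ) - 1) := Real.sqrt_pos.mpr hm10
  have hmain : Real.sqrt ((m : ℝ) - 1) * (Real.sqrt m * (V - η + τ) - tα * s) =
      Real.sqrt m * (Real.sqrt ((m : ℝ) - 1) * (V - η + τ) - tα * Real.sqrt (V - V ^ 2)) := by
    have : Real.sqrt ((m : ℝ) - 1) * (tα * s) = Real.sqrt m * (tα * Real.sqrt (V - V ^ 2)) := by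
      rw [mul_left_comm, hkey]; ring
    linarith [this]
  have hpos : Real.sqrt ((m : ℝ) - 1) * (Real.sqrt m * (V - η + τ) - tα * s) > 0 := by
    rw [hmain]; exact mul_pos hsm h
  nlinarith [hpos, hsm1]
end

section
/- Let Z and W be finite types and let p : Z × W → ℝ be a strictly positive probability mass function (p (z, w) > 0 for all z, w and ∑_{z,w} p (z, w) = 1). Define the marginals pZ z = ∑_w p (z, w) and pW w = ∑_z p (z, w), and the conditional density pCond z w = p (z, w) / pZ z. Then the mutual information I = ∑_z ∑_w p (z, w) * Real.log (p (z, w) / (pZ z * pW w)) satisfies I ≤ ∑_z ∑_w p (z, w) * Real.log (pCond z w) - ∑_z ∑_w (pZ z * pW w) * Real.log (pCond z w). -/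
/-- The CLUB (contrastive log-ratio upper bound) inequality: for a strictly positive joint
pmf `p` on `Z × W` with marginals `pZ z = ∑ w, p (z, w)` and `pW w = ∑ z, p (z, w)` and
conditional `pCond z w = p (z, w) / pZ z`, the mutual information is bounded above by
`E_{p}[log pCond] − E_{pZ ⊗ pW}[log pCond]`. -/
theorem club_mutual_information_upper_bound {Z W : Type*} [Fintype Z] [Fintype W]
    (p : Z × W → ℝ) (hpos : ∀ z w, 0 < p (z, w))
    (hsum : ∑ z, ∑ w, p (z, w) = 1) :
    (∑ z, ∑ w, p (z, w) *
        Real.log (p (z, w) / ((∑ w', p (z, w')) * (∑ z', p (z', w))))) ≤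
      (∑ z, ∑ w, p (z, w) * Real.log (p (z, w) / (∑ w', p (z, w')))) -
        (∑ z, ∑ w, ((∑ w', p (z, w')) * (∑ z', p (z', w))) *
          Real.log (p (z, w) / (∑ w', p (z, w')))) := by
  rcases isEmpty_or_nonempty W with hW | hW
  · simp at hsum
  rcases isEmpty_or_nonempty Z with hZ | hZ
  · simp at hsum
  have hpZpos : ∀ z, 0 < ∑ w', p (z, w') :=
    fun z => Finset.sum_pos (fun w _ => hpos z w) Finset.univ_nonempty
  have hpWpos : ∀ w, 0 < ∑ z', p (z', w) :=
    fun w => Finset.sum_pos (fun z _ => hpos z w) Finset.univ_nonempty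
  have hpZsum : ∑ z, ∑ w', p (z, w') = 1 := hsum
  -- Jensen step
  have key : ∀ w, ∑ z, (∑ w', p (z, w')) * Real.log (p (z, w) / (∑ w', p (z, w'))) ≤
      Real.log (∑ z', p (z', w)) := by
    intro w
    have hconc := strictConcaveOn_log_Ioi.concaveOn
    have h := hconc.le_map_sum (t := Finset.univ) (w := fun z => ∑ w', p (z, w'))
      (p := fun z => p (z, w) / (∑ w', p (z, w')))
      (fun z _ => (hpZpos z).le) hpZsum
      (fun z _ => Set.mem_Ioi.mpr (div_pos (hpos z w) (hpZpos z)))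
    simp only [smul_eq_mul] at h
    have heq : ∑ z, (∑ w', p (z, w')) * (p (z, w) / (∑ w', p (z, w'))) = ∑ z', p (z', w) := by
      apply Finset.sum_congr rfl
      intro z _
      rw [mul_div_assoc']
      exact mul_div_cancel_left₀ _ (hpZpos z).ne'
    rwa [heq] at h
  have step : ∑ w, ∑ z, ((∑ w', p (z, w')) * (∑ z', p (z', w))) *
        Real.log (p (z, w) / (∑ w', p (z, w'))) ≤
      ∑ w, (∑ z', p (z', w)) * Real.log (∑ z', p (z', w)) := by
    apply Finset.sum_le_sum
    intro w _
    have : ∑ z, ((∑ w', p (z, w')) * (∑ z', p (z', w))) *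
        Real.log (p (z, w) / (∑ w', p (z, w'))) =
        (∑ z', p (z', w)) * ∑ z, (∑ w', p (z, w')) * Real.log (p (z, w) / (∑ w', p (z, w'))) := by
      rw [Finset.mul_sum]; apply Finset.sum_congr rfl; intro z _; ring
    rw [this]
    exact mul_le_mul_of_nonneg_left (key w) (hpWpos w).le
  -- rewrite the log in LHS
  have hlog : ∀ z w, Real.log (p (z, w) / ((∑ w', p (z, w')) * (∑ z', p (z', w)))) =
      Real.log (p (z, w) / (∑ w', p (z, w'))) - Real.log (∑ z', p (z', w)) := by
    intro z w
    rw [div_mul_eq_div_div, Real.log_div (div_pos (hpos z w) (hpZpos z)).ne' (hpWpos w).ne']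
  have hLHS : (∑ z, ∑ w, p (z, w) *
        Real.log (p (z, w) / ((∑ w', p (z, w')) * (∑ z', p (z', w))))) =
      (∑ z, ∑ w, p (z, w) * Real.log (p (z, w) / (∑ w', p (z, w')))) -
      (∑ z, ∑ w, p (z, w) * Real.log (∑ z', p (z', w))) := by
    rw [← Finset.sum_sub_distrib]
    apply Finset.sum_congr rfl; intro z _
    rw [← Finset.sum_sub_distrib]
    apply Finset.sum_congr rfl; intro w _
    rw [hlog]; ring
  rw [hLHS]
  apply sub_le_sub_left
  rw [Finset.sum_comm]
  calc ∑ w, ∑ z, ((∑ w', p (z, w')) * (∑ z', p (z', w))) *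
        Real.log (p (z, w) / (∑ w', p (z, w'))) ≤
      ∑ w, (∑ z', p (z', w)) * Real.log (∑ z', p (z', w)) := step
    _ = ∑ z, ∑ w, p (z, w) * Real.log (∑ z', p (z', w)) := by
        rw [Finset.sum_comm]
        apply Finset.sum_congr rfl; intro w _
        rw [Finset.sum_mul]
end
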